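/- arXiv:1206.5434 — 2 statements merged into one kernel-verified Lean document; each statement's English description precedes it below -/
import Mathlib

section
/- Let $(\mathcal{A},\curlywedge,\lozenge)$ be an ungraded pre-Poisson algebra. Then the symmetrized product $\alpha\cdot\beta = \alpha\curlywedge\beta + \beta\curlywedge\alpha$ and antisymmetrized bracket $[\alpha,\beta] = \alpha\lozenge\beta - \beta\lozenge\alpha$ satisfy the Leibniz rule: $[\alpha, \beta\cdot\gamma] = [\alpha,\beta]\cdot\gamma + \beta\cdot[\alpha,\gamma]$. -/
/-! The compatibilities `hc2` and `hc3` turn `[α, β ⋏ γ]` into `[α, β] ⋏ γ` (and likewise with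
`β, γ` swapped), while `hc1` kills the terms `γ ⋏ [α, β]` and `β ⋏ [α, γ]` of the right-hand side. -/

section PrePoisson

variable {K V : Type*} [CommRing K] [AddCommGroup V] [Module K V] (c l : V →ₗ[K] V →ₗ[K] V)

theorem bracket_zinbiel_eq (hc2 : ∀ x y z : V, l x (c y z) = c (l x y) z)
    (hc3 : ∀ x y z : V, c (l x y) z = l (c x z) y) (x y z : V) :
    l x (c y z) - l (c y z) x = c (l x y - l y x) z := by
  rw [hc2, ← hc3, map_sub, LinearMap.sub_apply]

theorem zinbiel_bracket_eq_zero (hc1 : ∀ x y z : V, c x (l y z) = c x (l z y)) (x y z : V) :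
    c x (l y z - l z y) = 0 := by
  rw [map_sub, hc1, sub_self]

end PrePoisson

theorem prePoisson_leibniz_general {K V : Type*} [Field K]
    [AddCommGroup V] [Module K V]
    (c l : V →ₗ[K] V →ₗ[K] V)
    (hc1 : ∀ x y z : V, c x (l y z) = c x (l z y))
    (hc2 : ∀ x y z : V, l x (c y z) = c (l x y) z)
    (hc3 : ∀ x y z : V, c (l x y) z = l (c x z) y) :
    ∀ α β γ : V,
      l α (c β γ + c γ β) - l (c β γ + c γ β) α =
      (c (l α β - l β α) γ + c γ (l α β - l β α)) +
      (c β (l α γ - l γ α) + c (l α γ - l γ α) β) := by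
  intro α β γ
  have hβγ := bracket_zinbiel_eq c l hc2 hc3 α β γ
  have hγβ := bracket_zinbiel_eq c l hc2 hc3 α γ β
  rw [zinbiel_bracket_eq_zero c l hc1, zinbiel_bracket_eq_zero c l hc1, ← hβγ, ← hγβ,
    map_add, map_add, LinearMap.add_apply]
  abel

/-- In a pre-Poisson algebra the symmetrized product and antisymmetrized bracket
satisfy the Leibniz rule `[α, β·γ] = [α,β]·γ + β·[α,γ]`. -/
theorem prePoisson_leibniz {K V : Type*} [Field K]
    [AddCommGroup V] [Module K V]
    (c l : V →ₗ[K] V →ₗ[K] V)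
    (hz : ∀ x y z : V, c (c x y) z = c x (c y z) + c x (c z y))
    (hp : ∀ x y z : V, l (l x y) z - l x (l y z) = l (l x z) y - l x (l z y))
    (hc1 : ∀ x y z : V, c x (l y z) = c x (l z y))
    (hc2 : ∀ x y z : V, l x (c y z) = c (l x y) z)
    (hc3 : ∀ x y z : V, c (l x y) z = l (c x z) y) :
    ∀ α β γ : V,
      l α (c β γ + c γ β) - l (c β γ + c γ β) α =
      (c (l α β - l β α) γ + c γ (l α β - l β α)) +
      (c β (l α γ - l γ α) + c (l α γ - l γ α) β) :=
  prePoisson_leibniz_general c l hc1 hc2 hc3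
end

section
/- Let $(\mathcal{A},\curlywedge,\lozenge)$ be a graded pre-$(a,b)$-algebra. Define $\ell(\alpha,\beta) = \alpha\diamond\beta - (-1)^{\alpha\beta + b-a+1}\beta\diamond\alpha$ on $\mathcal{A}[-a+1]$ (degrees and $\diamond$ as induced by the shift). Then $\alpha\wedge\ell(\beta,\gamma) = 0$ and $\ell(\alpha,\beta\wedge\gamma) = (-1)^{\alpha+b-a+1}\ell(\alpha,\beta)\wedge\gamma$ for all homogeneous $\alpha,\beta,\gamma$. -/
/-!
After the shift every identity is a single instance of an axiom: `α ∧ ℓ(β,γ) = 0` is the graded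
symmetry of `⋏` in a `◊`-argument, and `ℓ(α, β ∧ γ) = ±ℓ(α,β) ∧ γ` follows term by term from
`α ◊ (β ⋏ γ) = (α ◊ β) ⋏ γ` and `(β ◊ α) ⋏ γ = ± (β ⋏ γ) ◊ α`. What remains is sign bookkeeping:
the exponents of `-1` on the two sides differ by even integers.
-/

theorem neg_one_zpow_eq_of_even_sub {K : Type*} [DivisionRing K] {m n : ℤ} (h : Even (m - n)) :
    (-1 : K) ^ m = (-1 : K) ^ n := by
  rw [← sub_add_cancel m n, zpow_add₀ (neg_ne_zero.mpr one_ne_zero), h.neg_one_zpow, one_mul]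

namespace PreABAlgebra

variable {K A : Type*} [Field K] [AddCommGroup A] [Module K A]

/-! Here `p` (resp. `q`) is the shifted degree `|x| + a - 1` (resp. `|y| + a - 1`). -/

def shiftedWedge (curly : A →ₗ[K] A →ₗ[K] A) (x y : A) (p : ℤ) : A :=
  (-1 : K) ^ p • curly x y

def shiftedDiamond (a b : ℤ) (loz : A →ₗ[K] A →ₗ[K] A) (x y : A) (p : ℤ) : A :=
  (-1 : K) ^ ((b - a + 1) * p) • loz x y

def shiftedBracket (a b : ℤ) (loz : A →ₗ[K] A →ₗ[K] A) (x y : A) (p q : ℤ) : A :=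
  shiftedDiamond a b loz x y p - (-1 : K) ^ (p * q + b - a + 1) • shiftedDiamond a b loz y x q

variable {a b : ℤ} {curly loz : A →ₗ[K] A →ₗ[K] A}

theorem shiftedWedge_shiftedBracket_eq_zero {x y z : A} {p q r : ℤ}
    (h : curly x (loz y z) = (-1 : K) ^ ((q - a + 1 + b) * (r - a + 1 + b)) • curly x (loz z y)) :
    shiftedWedge curly x (shiftedBracket a b loz y z q r) p = 0 := by
  have hsign : (-1 : K) ^ ((b - a + 1) * q) * (-1 : K) ^ ((q - a + 1 + b) * (r - a + 1 + b)) =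
      (-1 : K) ^ (q * r + b - a + 1) * (-1 : K) ^ ((b - a + 1) * r) := by
    simp only [← zpow_add₀ (neg_ne_zero.mpr (one_ne_zero (α := K)))]
    apply neg_one_zpow_eq_of_even_sub
    rw [show _ - _ = 2 * ((b - a + 1) * q) + (b - a + 1) * (b - a + 1 - 1) by ring]
    exact (even_two_mul _).add (Int.even_mul_pred_self _)
  simp only [shiftedWedge, shiftedBracket, shiftedDiamond, map_sub, map_smul, h, smul_smul,
    hsign, sub_self, smul_zero]

theorem shiftedBracket_shiftedWedge {x y z : A} {p q r : ℤ}
    (h₂ : loz x (curly y z) = curly (loz x y) z)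
    (h₃ : curly (loz y x) z = (-1 : K) ^ ((p - a + 1 + b) * (r - a + 1 + a)) • loz (curly y z) x) :
    shiftedBracket a b loz x (shiftedWedge curly y z q) p (q + r + 1) =
      (-1 : K) ^ (p + b - a + 1) •
        shiftedWedge curly (shiftedBracket a b loz x y p q) z (p + q + b - a + 1) := by
  simp only [shiftedWedge, shiftedBracket, shiftedDiamond, map_sub, map_smul,
    LinearMap.sub_apply, LinearMap.smul_apply, h₂, h₃, smul_smul, smul_sub]
  congr 2 <;>
  · simp only [← zpow_add₀ (neg_ne_zero.mpr (one_ne_zero (α := K)))]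
    exact neg_one_zpow_eq_of_even_sub ⟨-(p + b - a + 1), by ring⟩

end PreABAlgebra

open PreABAlgebra

theorem pre_ab_shifted_bracket_relations_general {K A : Type*} [Field K] [AddCommGroup A] [Module K A]
    (a b : ℤ)
    (curly loz : A →ₗ[K] A →ₗ[K] A)
    (IsHomog : A → ℤ → Prop)
    (h_compat1 : ∀ x y z : A, ∀ n m r : ℤ, IsHomog x n → IsHomog y m → IsHomog z r →
      curly x (loz y z) = ((-1 : K)) ^ ((m + b) * (r + b)) • curly x (loz z y))
    (h_compat2 : ∀ x y z : A, ∀ n m r : ℤ, IsHomog x n → IsHomog y m → IsHomog z r →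
      loz x (curly y z) = curly (loz x y) z)
    (h_compat3 : ∀ x y z : A, ∀ n m r : ℤ, IsHomog x n → IsHomog y m → IsHomog z r →
      curly (loz x y) z = ((-1 : K)) ^ ((m + b) * (r + a)) • loz (curly x z) y)
    (W D : A → A → ℤ → A)
    (hW : ∀ x y : A, ∀ px : ℤ, W x y px = ((-1 : K)) ^ px • curly x y)
    (hD : ∀ x y : A, ∀ px : ℤ, D x y px = ((-1 : K)) ^ ((b - a + 1) * px) • loz x y)
    (L : A → A → ℤ → ℤ → A)
    (hL : ∀ x y : A, ∀ px py : ℤ,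
      L x y px py = D x y px - ((-1 : K)) ^ (px * py + b - a + 1) • D y x py) :
    ∀ (α β γ : A) (p q r : ℤ),
      IsHomog α (p - a + 1) → IsHomog β (q - a + 1) → IsHomog γ (r - a + 1) →
      (W α (L β γ q r) p = 0) ∧
      (L α (W β γ q) p (q + r + 1) =
        ((-1 : K)) ^ (p + b - a + 1) • W (L α β p q) γ (p + q + b - a + 1)) := by
  intro α β γ p q r hα hβ hγ
  obtain rfl : W = shiftedWedge curly := funext₃ hW
  obtain rfl : D = shiftedDiamond a b loz := funext₃ hD
  obtain rfl : L = shiftedBracket a b loz := funext fun x ↦ funext₃ (hL x)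
  exact ⟨shiftedWedge_shiftedBracket_eq_zero (h_compat1 α β γ _ _ _ hα hβ hγ),
    shiftedBracket_shiftedWedge (h_compat2 α β γ _ _ _ hα hβ hγ)
      (h_compat3 β α γ _ _ _ hβ hα hγ)⟩

/-- For a graded pre-`(a,b)`-algebra, with the shifted products
`α ∧ β = (-1)^p • (α ⋏ β)` and `α ⋄ β = (-1)^((b-a+1)p) • (α ◊ β)` on `𝒜[-a+1]`
(shifted degree `p = |α| + a - 1`; encoded as `W x y px`, `D x y px`) and the graded
antisymmetrization `ℓ(α,β) = α ⋄ β - (-1)^(pq+b-a+1) β ⋄ α` (encoded as `L x y px py`),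
one has `α ∧ ℓ(β,γ) = 0` and `ℓ(α, β ∧ γ) = (-1)^(p+b-a+1) ℓ(α,β) ∧ γ`. -/
theorem pre_ab_shifted_bracket_relations {K A : Type*} [Field K] [AddCommGroup A] [Module K A]
    (a b : ℤ)
    (curly loz : A →ₗ[K] A →ₗ[K] A)
    (IsHomog : A → ℤ → Prop)
    (h_curly_deg : ∀ x y : A, ∀ n m : ℤ, IsHomog x n → IsHomog y m →
      IsHomog (curly x y) (n + m + a))
    (h_loz_deg : ∀ x y : A, ∀ n m : ℤ, IsHomog x n → IsHomog y m →
      IsHomog (loz x y) (n + m + b))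
    (h_zinbiel : ∀ x y z : A, ∀ n m r : ℤ, IsHomog x n → IsHomog y m → IsHomog z r →
      curly (curly x y) z =
        curly x (curly y z) + ((-1 : K)) ^ ((m + a) * (r + a)) • curly x (curly z y))
    (h_preLie : ∀ x y z : A, ∀ n m r : ℤ, IsHomog x n → IsHomog y m → IsHomog z r →
      loz (loz x y) z - loz x (loz y z) =
        ((-1 : K)) ^ ((m + b) * (r + b)) • (loz (loz x z) y - loz x (loz z y)))
    (h_compat1 : ∀ x y z : A, ∀ n m r : ℤ, IsHomog x n → IsHomog y m → IsHomog z r →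
      curly x (loz y z) = ((-1 : K)) ^ ((m + b) * (r + b)) • curly x (loz z y))
    (h_compat2 : ∀ x y z : A, ∀ n m r : ℤ, IsHomog x n → IsHomog y m → IsHomog z r →
      loz x (curly y z) = curly (loz x y) z)
    (h_compat3 : ∀ x y z : A, ∀ n m r : ℤ, IsHomog x n → IsHomog y m → IsHomog z r →
      curly (loz x y) z = ((-1 : K)) ^ ((m + b) * (r + a)) • loz (curly x z) y)
    (W D : A → A → ℤ → A)
    (hW : ∀ x y : A, ∀ px : ℤ, W x y px = ((-1 : K)) ^ px • curly x y)
    (hD : ∀ x y : A, ∀ px : ℤ, D x y px = ((-1 : K)) ^ ((b - a + 1) * px) • loz x y)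
    (L : A → A → ℤ → ℤ → A)
    (hL : ∀ x y : A, ∀ px py : ℤ,
      L x y px py = D x y px - ((-1 : K)) ^ (px * py + b - a + 1) • D y x py) :
    ∀ (α β γ : A) (p q r : ℤ),
      IsHomog α (p - a + 1) → IsHomog β (q - a + 1) → IsHomog γ (r - a + 1) →
      (W α (L β γ q r) p = 0) ∧
      (L α (W β γ q) p (q + r + 1) =
        ((-1 : K)) ^ (p + b - a + 1) • W (L α β p q) γ (p + q + b - a + 1)) :=
  pre_ab_shifted_bracket_relations_general a b curly loz IsHomog h_compat1 h_compat2 h_compat3 W D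
    hW hD L hL
end
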